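/- arXiv:0908.1230 — 3 statements merged into one kernel-verified Lean document; each statement's English description precedes it below -/
import Mathlib

section
/- Let T > 0, σ > 0, λ > 0 and κ₁ > 0. Let ρ, κ, G, c, g be continuous real-valued functions on [0,1]×[0,T] with ρ ≥ 0, κ ≥ κ₁, c ≥ 0 and g ≥ 0, and let p_s : ℝ → [0,∞) be continuous with p_s(θ) = 0 for θ ≤ 0. Let β⁰, β¹ > 0 and h⁰, h¹ ≥ 0 be constants. Suppose θ is continuous on [0,1]×[0,T], twice continuously differentiable in x and once in t on [0,1]×(0,T], and satisfies (ρ + σ)θ_t = (κ θ_x)_x + G θ_x + c θ − (λ + θ) p_s(θ) + g on (0,1)×(0,T], with boundary conditions (κ θ_x)(1,t) = β¹(h¹ − θ(1,t)) and (κ θ_x)(0,t) = β⁰(θ(0,t) − h⁰) for t ∈ (0,T], and θ(x,0) ≥ 0 for all x ∈ [0,1]. Then θ(x,t) ≥ 0 for all (x,t) ∈ [0,1]×[0,T]. -/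
/-!
Weighted minimum principle. Choose `K ≥ 0` with `c < σ K` on the rectangle. If `θ` takes a negative
value, then `e^{-Kt} θ` attains a negative minimum at some `(x₀, t₀)`, with `t₀ > 0` by the initial
condition. There `θ_t ≤ K θ`. At a boundary point the Robin condition forces `θ_x` to have the sign
forbidden by minimality. At an interior point `θ_x = 0`, `(κ θ_x)_x ≥ 0` and `p_s(θ) = 0`, so the
equation gives `(ρ + σ) θ_t ≥ c θ > σ K θ ≥ (ρ + σ) K θ`, contradicting `θ_t ≤ K θ`.
-/

open Set Filter Topology

theorem IsLocalMinOn.deriv_nonpos_Icc_right {f : ℝ → ℝ} {a b : ℝ} (hab : a < b)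
    (h : IsLocalMinOn f (Icc a b) b) : deriv f b ≤ 0 := by
  by_cases hf : DifferentiableAt ℝ f b
  · have hdir : a - b ∈ posTangentConeAt (Icc a b) b :=
      mem_posTangentConeAt_of_segment_subset (by
        rw [add_sub_cancel, segment_symm, segment_eq_Icc hab.le])
    have := h.hasFDerivWithinAt_nonneg hf.hasDerivAt.hasFDerivAt.hasFDerivWithinAt hdir
    rw [ContinuousLinearMap.toSpanSingleton_apply, smul_eq_mul] at this
    nlinarith
  · rw [deriv_zero_of_not_differentiableAt hf]

theorem IsLocalMinOn.deriv_nonneg_Icc_left {f : ℝ → ℝ} {a b : ℝ} (hab : a < b)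
    (h : IsLocalMinOn f (Icc a b) a) : 0 ≤ deriv f a := by
  by_cases hf : DifferentiableAt ℝ f a
  · have hdir : b - a ∈ posTangentConeAt (Icc a b) a :=
      mem_posTangentConeAt_of_segment_subset (by
        rw [add_sub_cancel, segment_eq_Icc hab.le])
    have := h.hasFDerivWithinAt_nonneg hf.hasDerivAt.hasFDerivAt.hasFDerivWithinAt hdir
    rw [ContinuousLinearMap.toSpanSingleton_apply, smul_eq_mul] at this
    nlinarith
  · rw [deriv_zero_of_not_differentiableAt hf]

theorem deriv_le_mul_of_isLocalMinOn_exp_mul {u : ℝ → ℝ} {K a t : ℝ} (hat : a < t)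
    (hu : DifferentiableAt ℝ u t)
    (hmin : IsLocalMinOn (fun s => Real.exp (-K * s) * u s) (Icc a t) t) :
    deriv u t ≤ K * u t := by
  have hw : HasDerivAt (fun s => Real.exp (-K * s) * u s)
      (Real.exp (-K * t) * (-K) * u t + Real.exp (-K * t) * deriv u t) t := by
    have hexp : HasDerivAt (fun s => Real.exp (-K * s)) (Real.exp (-K * t) * (-K)) t := by
      simpa using ((hasDerivAt_id t).const_mul (-K)).exp
    exact hexp.mul hu.hasDerivAt
  have := hw.deriv ▸ hmin.deriv_nonpos_Icc_right hat
  have hE := Real.exp_pos (-K * t)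
  nlinarith

-- `k * deriv f` vanishes at `x`; a negative derivative would make `deriv f < 0` just to the right
-- of `x`, so `f` would drop below `f x` there.
theorem IsMinOn.deriv_mul_deriv_nonneg {f k : ℝ → ℝ} {a b x : ℝ} (hx : x ∈ Ioo a b)
    (hmin : IsMinOn f (Ioo a b) x) (hf : ContinuousOn f (Ioo a b))
    (hk : ∀ y ∈ Ioo a b, 0 < k y) : 0 ≤ deriv (fun y => k y * deriv f y) x := by
  by_contra! hneg
  have hfx : deriv f x = 0 := (hmin.isLocalMin (Ioo_mem_nhds hx.1 hx.2)).deriv_eq_zero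
  have hF := hasDerivAt_iff_tendsto_slope.mp (differentiableAt_of_deriv_ne_zero hneg.ne).hasDerivAt
  have hFneg : ∀ᶠ y in 𝓝[>] x, y < b ∧ deriv f y < 0 := by
    filter_upwards [(hF.mono_left (nhdsGT_le_nhdsNE x)).eventually (gt_mem_nhds hneg),
      Ioo_mem_nhdsGT hx.2, self_mem_nhdsWithin] with y hslope hyb hxy
    rw [slope_def_field, hfx, mul_zero, sub_zero, div_neg_iff] at hslope
    refine ⟨hyb.2, ?_⟩
    have hxy' : 0 < y - x := sub_pos.mpr hxy
    have hky := hk y ⟨hx.1.trans hxy, hyb.2⟩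
    rcases hslope with h | h
    · linarith [h.2]
    · exact neg_of_mul_neg_right h.1 hky.le
  obtain ⟨c, hxc, hc⟩ := (mem_nhdsGT_iff_exists_Ioo_subset (a := x)).mp hFneg
  obtain ⟨d, hxd, hdc⟩ := exists_between (mem_Ioi.mp hxc)
  have hdb : d < b := (hc ⟨hxd, hdc⟩).1
  have hanti : StrictAntiOn f (Icc x d) :=
    strictAntiOn_of_deriv_neg (convex_Icc x d)
      (hf.mono (Icc_subset_Ioo hx.1 hdb))
      (fun y hy => by
        rw [interior_Icc] at hy
        exact (hc (Ioo_subset_Ioo_right hdc.le hy)).2)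
  exact (hanti (left_mem_Icc.mpr hxd.le) (right_mem_Icc.mpr hxd.le) hxd).not_ge
    (hmin ⟨hx.1.trans hxd, hdb⟩)

theorem IsCompact.exists_nonneg_forall_lt_mul {α : Type*} [TopologicalSpace α] {s : Set α}
    {c : α → ℝ} {σ : ℝ} (hs : IsCompact s) (hc : ContinuousOn c s) (hσ : 0 < σ) :
    ∃ K, 0 ≤ K ∧ ∀ p ∈ s, c p < σ * K := by
  obtain ⟨M, hM⟩ := hs.bddAbove_image hc
  refine ⟨(max M 0 + 1) / σ, by positivity, fun p hp => ?_⟩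
  rw [mul_div_cancel₀ _ hσ.ne']
  linarith [hM (mem_image_of_mem c hp), le_max_left M 0]

theorem IsCompact.exists_isMinOn_exp_mul_of_neg {s : Set (ℝ × ℝ)} {u : ℝ × ℝ → ℝ}
    (hs : IsCompact s) (hu : ContinuousOn u s) (hneg : ∃ p ∈ s, u p < 0) (K : ℝ) :
    ∃ p ∈ s, u p < 0 ∧ IsMinOn (fun q => Real.exp (-K * q.2) * u q) s p := by
  obtain ⟨q, hq, huq⟩ := hneg
  have hw : ContinuousOn (fun q : ℝ × ℝ => Real.exp (-K * q.2) * u q) s := by fun_prop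
  obtain ⟨p, hp, hmin⟩ := hs.exists_isMinOn ⟨q, hq⟩ hw
  have hwp : Real.exp (-K * p.2) * u p < 0 :=
    (hmin hq).trans_lt (mul_neg_of_pos_of_neg (Real.exp_pos _) huq)
  exact ⟨p, hp, neg_of_mul_neg_right hwp (Real.exp_pos _).le, hmin⟩

theorem temperature_nonnegativity_general
    (T σ lam κ₁ β0 β1 hbar0 hbar1 : ℝ)
    (hσ : 0 < σ) (hκ₁ : 0 < κ₁)
    (hβ0 : 0 < β0) (hβ1 : 0 < β1) (hhbar0 : 0 ≤ hbar0) (hhbar1 : 0 ≤ hbar1)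
    (ρ κ G c g : ℝ → ℝ → ℝ) (θ : ℝ → ℝ → ℝ) (p_s : ℝ → ℝ)
    (h4 : ContinuousOn (fun p : ℝ × ℝ => c p.1 p.2) (Set.Icc 0 1 ×ˢ Set.Icc 0 T))
    (h6 : (∀ x ∈ Set.Icc (0:ℝ) 1, ∀ t ∈ Set.Icc (0:ℝ) T, 0 ≤ ρ x t))
    (h7 : (∀ x ∈ Set.Icc (0:ℝ) 1, ∀ t ∈ Set.Icc (0:ℝ) T, κ₁ ≤ κ x t))
    (h9 : (∀ x ∈ Set.Icc (0:ℝ) 1, ∀ t ∈ Set.Icc (0:ℝ) T, 0 ≤ g x t))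
    (h12 : (∀ s ≤ (0:ℝ), p_s s = 0))
    (h13 : ContinuousOn (fun p : ℝ × ℝ => θ p.1 p.2) (Set.Icc 0 1 ×ˢ Set.Icc 0 T))
    (h15 : (∀ x ∈ Set.Icc (0:ℝ) 1, ∀ t ∈ Set.Ioc (0:ℝ) T, DifferentiableAt ℝ (fun s => θ x s) t))
    (h16 : (∀ x ∈ Set.Ioo (0:ℝ) 1, ∀ t ∈ Set.Ioc (0:ℝ) T,
      (ρ x t + σ) * deriv (fun s => θ x s) t
      = deriv (fun y => κ y t * deriv (fun z => θ z t) y) x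
        + G x t * deriv (fun z => θ z t) x
        + c x t * θ x t - (lam + θ x t) * p_s (θ x t) + g x t))
    (h17 : (∀ t ∈ Set.Ioc (0:ℝ) T,
      κ 1 t * deriv (fun z => θ z t) 1 = β1 * (hbar1 - θ 1 t)))
    (h18 : (∀ t ∈ Set.Ioc (0:ℝ) T,
      κ 0 t * deriv (fun z => θ z t) 0 = β0 * (θ 0 t - hbar0)))
    (h19 : (∀ x ∈ Set.Icc (0:ℝ) 1, 0 ≤ θ x 0))
    :
    ∀ x ∈ Set.Icc (0:ℝ) 1, ∀ t ∈ Set.Icc (0:ℝ) T, 0 ≤ θ x t := by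
  intro x hx t ht
  by_contra! hneg
  have hQ : IsCompact (Icc (0:ℝ) 1 ×ˢ Icc (0:ℝ) T) := isCompact_Icc.prod isCompact_Icc
  obtain ⟨K, hK, hcK⟩ := hQ.exists_nonneg_forall_lt_mul h4 hσ
  obtain ⟨⟨x0, t0⟩, ⟨hx0, ht0⟩, hθ0, hmin⟩ :=
    hQ.exists_isMinOn_exp_mul_of_neg h13 ⟨(x, t), ⟨hx, ht⟩, hneg⟩ K
  have ht0' : t0 ∈ Ioc 0 T := ⟨ht0.1.lt_of_ne (by rintro rfl; exact (h19 x0 hx0).not_gt hθ0), ht0.2⟩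
  have hminx : IsMinOn (fun y => θ y t0) (Icc 0 1) x0 := fun y hy =>
    (mul_le_mul_iff_right₀ (Real.exp_pos _)).mp (hmin (mk_mem_prod hy ht0))
  have hdt : deriv (fun s => θ x0 s) t0 ≤ K * θ x0 t0 :=
    deriv_le_mul_of_isLocalMinOn_exp_mul ht0'.1 (h15 x0 hx0 t0 ht0')
      (IsMinOn.localize fun s hs => hmin (mk_mem_prod hx0 ⟨hs.1, hs.2.trans ht0.2⟩))
  have hκ : ∀ y ∈ Icc (0:ℝ) 1, 0 < κ y t0 := fun y hy => hκ₁.trans_le (h7 y hy t0 ht0)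
  rcases hx0.1.eq_or_lt with rfl | h0
  · have hd := hminx.localize.deriv_nonneg_Icc_left zero_lt_one
    nlinarith [h18 t0 ht0', hκ 0 hx0, mul_pos hβ0 (by linarith : 0 < hbar0 - θ 0 t0)]
  rcases hx0.2.eq_or_lt with rfl | h1
  · have hd := hminx.localize.deriv_nonpos_Icc_right zero_lt_one
    nlinarith [h17 t0 ht0', hκ 1 hx0, mul_pos hβ1 (by linarith : 0 < hbar1 - θ 1 t0)]
  have hx0' : x0 ∈ Ioo 0 1 := ⟨h0, h1⟩
  have hslice : ContinuousOn (fun y => θ y t0) (Icc 0 1) :=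
    h13.comp (by fun_prop) fun y hy => mk_mem_prod hy ht0
  have hflux := (hminx.on_subset Ioo_subset_Icc_self).deriv_mul_deriv_nonneg hx0'
    (hslice.mono Ioo_subset_Icc_self) fun y hy => hκ y (Ioo_subset_Icc_self hy)
  have hθx : deriv (fun z => θ z t0) x0 = 0 :=
    (hminx.isLocalMin (Icc_mem_nhds h0 h1)).deriv_eq_zero
  have hpde := h16 x0 hx0' t0 ht0'
  rw [hθx, h12 _ hθ0.le] at hpde
  nlinarith [mul_le_mul_of_nonneg_left hdt (add_nonneg (h6 x0 hx0 t0 ht0) hσ.le),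
    mul_nonpos_of_nonneg_of_nonpos (mul_nonneg (h6 x0 hx0 t0 ht0) hK) hθ0.le,
    mul_neg_of_pos_of_neg (sub_pos.mpr (hcK _ (mk_mem_prod hx0 ht0))) hθ0, h9 x0 hx0 t0 ht0]

theorem temperature_nonnegativity
    (T σ lam κ₁ β0 β1 hbar0 hbar1 : ℝ)
    (hT : 0 < T) (hσ : 0 < σ) (hlam : 0 < lam) (hκ₁ : 0 < κ₁)
    (hβ0 : 0 < β0) (hβ1 : 0 < β1) (hhbar0 : 0 ≤ hbar0) (hhbar1 : 0 ≤ hbar1)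
    (ρ κ G c g : ℝ → ℝ → ℝ) (θ : ℝ → ℝ → ℝ) (p_s : ℝ → ℝ)
    (h1 : ContinuousOn (fun p : ℝ × ℝ => ρ p.1 p.2) (Set.Icc 0 1 ×ˢ Set.Icc 0 T))
    (h2 : ContinuousOn (fun p : ℝ × ℝ => κ p.1 p.2) (Set.Icc 0 1 ×ˢ Set.Icc 0 T))
    (h3 : ContinuousOn (fun p : ℝ × ℝ => G p.1 p.2) (Set.Icc 0 1 ×ˢ Set.Icc 0 T))
    (h4 : ContinuousOn (fun p : ℝ × ℝ => c p.1 p.2) (Set.Icc 0 1 ×ˢ Set.Icc 0 T))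
    (h5 : ContinuousOn (fun p : ℝ × ℝ => g p.1 p.2) (Set.Icc 0 1 ×ˢ Set.Icc 0 T))
    (h6 : (∀ x ∈ Set.Icc (0:ℝ) 1, ∀ t ∈ Set.Icc (0:ℝ) T, 0 ≤ ρ x t))
    (h7 : (∀ x ∈ Set.Icc (0:ℝ) 1, ∀ t ∈ Set.Icc (0:ℝ) T, κ₁ ≤ κ x t))
    (h8 : (∀ x ∈ Set.Icc (0:ℝ) 1, ∀ t ∈ Set.Icc (0:ℝ) T, 0 ≤ c x t))
    (h9 : (∀ x ∈ Set.Icc (0:ℝ) 1, ∀ t ∈ Set.Icc (0:ℝ) T, 0 ≤ g x t))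
    (h10 : Continuous p_s)
    (h11 : (∀ s, 0 ≤ p_s s))
    (h12 : (∀ s ≤ (0:ℝ), p_s s = 0))
    (h13 : ContinuousOn (fun p : ℝ × ℝ => θ p.1 p.2) (Set.Icc 0 1 ×ˢ Set.Icc 0 T))
    (h14 : (∀ t ∈ Set.Ioc (0:ℝ) T, ContDiffOn ℝ 2 (fun x => θ x t) (Set.Icc 0 1)))
    (h15 : (∀ x ∈ Set.Icc (0:ℝ) 1, ∀ t ∈ Set.Ioc (0:ℝ) T, DifferentiableAt ℝ (fun s => θ x s) t))
    (h16 : (∀ x ∈ Set.Ioo (0:ℝ) 1, ∀ t ∈ Set.Ioc (0:ℝ) T,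
      (ρ x t + σ) * deriv (fun s => θ x s) t
      = deriv (fun y => κ y t * deriv (fun z => θ z t) y) x
        + G x t * deriv (fun z => θ z t) x
        + c x t * θ x t - (lam + θ x t) * p_s (θ x t) + g x t))
    (h17 : (∀ t ∈ Set.Ioc (0:ℝ) T,
      κ 1 t * deriv (fun z => θ z t) 1 = β1 * (hbar1 - θ 1 t)))
    (h18 : (∀ t ∈ Set.Ioc (0:ℝ) T,
      κ 0 t * deriv (fun z => θ z t) 0 = β0 * (θ 0 t - hbar0)))
    (h19 : (∀ x ∈ Set.Icc (0:ℝ) 1, 0 ≤ θ x 0))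
    :
    ∀ x ∈ Set.Icc (0:ℝ) 1, ∀ t ∈ Set.Icc (0:ℝ) T, 0 ≤ θ x t :=
  temperature_nonnegativity_general T σ lam κ₁ β0 β1 hbar0 hbar1 hσ hκ₁ hβ0 hβ1 hhbar0 hhbar1 ρ κ G
    c g θ p_s h4 h6 h7 h9 h12 h13 h15 h16 h17 h18 h19
end

section
/- Let T > 0, σ > 0, λ > 0, κ₁ > 0, β⁰ > 0, β¹ > 0. Let p_s : ℝ → [0,∞) be continuous and nondecreasing with p_s(θ) = 0 for θ ≤ 0 and lim_{s→0⁺} p_s(s)/s = 0. Then there exists δ₀ > 0, depending only on p_s, λ, σ and T, with the following property: let 0 < δ ≤ δ₀, let ρ, χ, κ, G be continuous functions on [0,1]×[0,T] with ρ ≥ 0, χ ≥ 0 and κ ≥ κ₁, and let θ be continuous on [0,1]×[0,T], twice continuously differentiable in x and once in t on [0,1]×(0,T], satisfying (ρ + σ)θ_t = (κ θ_x)_x + G θ_x + (λ + θ)(ρχ − p_s(θ)) on (0,1)×(0,T], with boundary conditions (κθ_x)(1,t) = β¹(θ̄¹ − θ(1,t)) and (κθ_x)(0,t) = β⁰(θ(0,t)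 − θ̄⁰) where θ̄⁰ ≥ δ and θ̄¹ ≥ δ, and θ(x,0) ≥ δ for all x ∈ [0,1]. Then θ(x,t) ≥ e^{−T}·δ for all (x,t) ∈ [0,1]×[0,T]. -/
/-!
Put `W = e^t θ`. If `θ` dropped below `e^{-T} δ`, then `W` would reach some level `a ∈ (0, δ)`
below its initial values, and at the first time `t₀` it does so, at a point `x₀`, the profile
`θ(·, t₀)` is minimal at `x₀` while `e^t θ(x₀, t)` is minimal at `t₀` on `[0, t₀]`, so that
`θ_t ≤ -θ` there. A boundary minimum is ruled out by the sign of the Robin flux, since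
`θ < δ ≤ θ̄⁰, θ̄¹`. At an interior minimum `θ_x = 0` and `(κ θ_x)_x ≥ 0`, so the equation gives
`-(ρ + σ) θ ≥ (ρ + σ) θ_t ≥ -(λ + θ) p_s(θ)`, which contradicts `(λ + θ) p_s(θ) < σ θ`; this
holds for small `θ > 0` because `p_s(θ) = o(θ)`, and fixes `δ₀`.
-/

open Set Filter Topology

theorem eventually_mul_lt_of_tendsto_div {p : ℝ → ℝ} (h : Tendsto (fun s => p s / s) (𝓝[>] 0) (𝓝 0))
    (c : ℝ) {σ : ℝ} (hσ : 0 < σ) : ∀ᶠ s in 𝓝[>] 0, (c + s) * p s < σ * s := by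
  have hlim : Tendsto (fun s => (c + s) * (p s / s)) (𝓝[>] 0) (𝓝 ((c + 0) * 0)) :=
    (tendsto_const_nhds.add (tendsto_id.mono_left nhdsWithin_le_nhds)).mul h
  rw [add_zero, mul_zero] at hlim
  filter_upwards [hlim.eventually_lt_const hσ, self_mem_nhdsWithin] with s hs (hs0 : 0 < s)
  rwa [← mul_div_assoc, div_lt_iff₀ hs0] at hs

theorem deriv_nonneg_of_isMinOn_Icc_left {f : ℝ → ℝ} {a b : ℝ} (hab : a < b)
    (h : IsMinOn f (Icc a b) a) : 0 ≤ deriv f a := by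
  by_cases hf : DifferentiableAt ℝ f a
  · have hseg : segment ℝ a (a + (b - a)) ⊆ Icc a b := by
      rw [add_sub_cancel, segment_eq_Icc hab.le]
    have := h.localize.hasFDerivWithinAt_nonneg hf.hasDerivAt.hasFDerivAt.hasFDerivWithinAt
      (mem_posTangentConeAt_of_segment_subset hseg)
    simp only [ContinuousLinearMap.toSpanSingleton_apply, smul_eq_mul] at this
    exact nonneg_of_mul_nonneg_right this (sub_pos.2 hab)
  · rw [deriv_zero_of_not_differentiableAt hf]

theorem deriv_nonpos_of_isMinOn_Icc_right {f : ℝ → ℝ} {a b : ℝ} (hab : a < b)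
    (h : IsMinOn f (Icc a b) b) : deriv f b ≤ 0 := by
  by_cases hf : DifferentiableAt ℝ f b
  · have hseg : segment ℝ b (b + (a - b)) ⊆ Icc a b := by
      rw [add_sub_cancel, segment_symm, segment_eq_Icc hab.le]
    have := h.localize.hasFDerivWithinAt_nonneg hf.hasDerivAt.hasFDerivAt.hasFDerivWithinAt
      (mem_posTangentConeAt_of_segment_subset hseg)
    simp only [ContinuousLinearMap.toSpanSingleton_apply, smul_eq_mul] at this
    exact nonpos_of_mul_nonneg_right this (sub_neg.2 hab)
  · rw [deriv_zero_of_not_differentiableAt hf]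

theorem deriv_le_neg_of_isMinOn_exp_mul {f : ℝ → ℝ} {a t : ℝ} (hat : a < t)
    (hmin : IsMinOn (fun s => Real.exp s * f s) (Icc a t) t) (hf : DifferentiableAt ℝ f t) :
    deriv f t ≤ -f t := by
  have h := deriv_nonpos_of_isMinOn_Icc_right hat hmin
  rw [((Real.hasDerivAt_exp t).fun_mul hf.hasDerivAt).deriv, ← mul_add] at h
  linarith [nonpos_of_mul_nonpos_right h (Real.exp_pos t)]

theorem IsLocalMin.deriv_deriv_nonneg {f : ℝ → ℝ} {x : ℝ} (h : IsLocalMin f x)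
    (hf : ContinuousAt f x) : 0 ≤ deriv (deriv f) x := by
  by_contra! hneg
  have hmax := isLocalMax_of_deriv_deriv_neg hneg h.deriv_eq_zero hf
  have hconst : f =ᶠ[𝓝 x] fun _ => f x := by
    filter_upwards [h, hmax] with y hmin hmax using le_antisymm hmax hmin
  rw [hconst.deriv.deriv_eq] at hneg
  simp at hneg

theorem HasDerivAt.continuousAt_mul_of_eq_zero {f g : ℝ → ℝ} {g' x : ℝ} (hg : HasDerivAt g g' x)
    (hg0 : g x = 0) (hf : ContinuousAt f x) : HasDerivAt (fun y => f y * g y) (f x * g') x := by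
  rw [hasDerivAt_iff_tendsto_slope] at hg ⊢
  refine (hf.continuousWithinAt.tendsto.mul hg).congr fun y => ?_
  simp only [slope_def_field, hg0, mul_zero, sub_zero, mul_div_assoc]

theorem IsLocalMin.deriv_mul_deriv_nonneg {g κ : ℝ → ℝ} {x : ℝ} (h : IsLocalMin g x)
    (hg : ContDiffAt ℝ 2 g x) (hκ : ContinuousAt κ x) (hκ0 : 0 ≤ κ x) :
    0 ≤ deriv (fun y => κ y * deriv g y) x := by
  have hflux := ((hg.derivWithin (m := 1) le_rfl).differentiableAt one_ne_zero).hasDerivAt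
    |>.continuousAt_mul_of_eq_zero h.deriv_eq_zero hκ
  rw [hflux.deriv]
  exact mul_nonneg hκ0 (h.deriv_deriv_nonneg hg.continuousAt)

theorem exists_first_hitting_time {X : Type*} [TopologicalSpace X] [T2Space X] {K : Set X}
    (hK : IsCompact K) {W : X → ℝ → ℝ} {T a : ℝ}
    (hW : ContinuousOn (fun p : X × ℝ => W p.1 p.2) (K ×ˢ Icc 0 T))
    (h0 : ∀ x ∈ K, a < W x 0) {x₁ : X} {t₁ : ℝ} (hx₁ : x₁ ∈ K) (ht₁ : t₁ ∈ Icc 0 T)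
    (h₁ : W x₁ t₁ ≤ a) :
    ∃ x₀ ∈ K, ∃ t₀ ∈ Ioc 0 T, W x₀ t₀ = a ∧ ∀ x ∈ K, ∀ t ∈ Icc 0 t₀, a ≤ W x t := by
  set S := (K ×ˢ Icc 0 T) ∩ (fun p : X × ℝ => W p.1 p.2) ⁻¹' Iic a
  have hS : IsCompact S := (hK.prod isCompact_Icc).of_isClosed_subset
    (hW.preimage_isClosed_of_isClosed (hK.isClosed.prod isClosed_Icc) isClosed_Iic)
    inter_subset_left
  obtain ⟨⟨x₀, t₀⟩, ⟨⟨hx₀, ht₀⟩, hWx₀⟩, hmin⟩ :=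
    hS.exists_isMinOn ⟨(x₁, t₁), ⟨hx₁, ht₁⟩, h₁⟩ continuous_snd.continuousOn
  have ht₀0 : t₀ ≠ 0 := by
    rintro rfl
    exact (h0 x₀ hx₀).not_ge hWx₀
  have hbefore : ∀ x ∈ K, ∀ t ∈ Ico 0 t₀, a < W x t := fun x hx t ht => by
    by_contra! hle
    exact ht.2.not_ge (hmin (a := (x, t)) ⟨⟨hx, ht.1, ht.2.le.trans ht₀.2⟩, hle⟩)
  have hafter : ∀ x ∈ K, ∀ t ∈ Icc 0 t₀, a ≤ W x t := by
    intro x hx t ht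
    have hWx : ContinuousOn (W x) (Icc 0 T) :=
      hW.comp (continuous_const.prodMk continuous_id).continuousOn fun s hs => ⟨hx, hs⟩
    refine ContinuousWithinAt.closure_le (by rwa [closure_Ico (Ne.symm ht₀0)])
      continuousWithinAt_const
      ((hWx t ⟨ht.1, ht.2.trans ht₀.2⟩).mono fun s hs => ⟨hs.1, hs.2.le.trans ht₀.2⟩)
      fun s hs => (hbefore x hx s hs).le
  exact ⟨x₀, hx₀, t₀, ⟨lt_of_le_of_ne ht₀.1 (Ne.symm ht₀0), ht₀.2⟩,
    le_antisymm hWx₀ (hafter x₀ hx₀ t₀ ⟨ht₀.1, le_rfl⟩), hafter⟩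

theorem exists_first_touch_of_lt_exp_neg_mul {X : Type*} [TopologicalSpace X] [T2Space X]
    {K : Set X} (hK : IsCompact K) {θ : X → ℝ → ℝ} {T δ : ℝ} (hδ : 0 < δ)
    (hθ : ContinuousOn (fun p : X × ℝ => θ p.1 p.2) (K ×ˢ Icc 0 T)) (h0 : ∀ x ∈ K, δ ≤ θ x 0)
    (hlow : ∃ x ∈ K, ∃ t ∈ Icc 0 T, θ x t < Real.exp (-T) * δ) :
    ∃ x₀ ∈ K, ∃ t₀ ∈ Ioc 0 T, 0 < θ x₀ t₀ ∧ θ x₀ t₀ < δ ∧ IsMinOn (θ · t₀) K x₀ ∧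
      IsMinOn (fun t => Real.exp t * θ x₀ t) (Icc 0 t₀) t₀ := by
  obtain ⟨x₁, hx₁, t₁, ht₁, h₁⟩ := hlow
  set a := max (Real.exp t₁ * θ x₁ t₁) (δ / 2)
  have ha0 : 0 < a := (half_pos hδ).trans_le (le_max_right _ _)
  have ha : a < δ := by
    refine max_lt ?_ (half_lt_self hδ)
    calc Real.exp t₁ * θ x₁ t₁ < Real.exp t₁ * (Real.exp (-T) * δ) :=
          mul_lt_mul_of_pos_left h₁ (Real.exp_pos _)
      _ = Real.exp (t₁ - T) * δ := by rw [← mul_assoc, ← Real.exp_add, sub_eq_add_neg]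
      _ ≤ δ := mul_le_of_le_one_left hδ.le (Real.exp_le_one_iff.2 (by linarith [ht₁.2]))
  have hW : ContinuousOn (fun p : X × ℝ => Real.exp p.2 * θ p.1 p.2) (K ×ˢ Icc 0 T) :=
    (Real.continuous_exp.comp continuous_snd).continuousOn.mul hθ
  obtain ⟨x₀, hx₀, t₀, ht₀, heq, hge⟩ :=
    exists_first_hitting_time (W := fun x t => Real.exp t * θ x t) (a := a) hK hW
    (fun x hx => by simpa using ha.trans_le (h0 x hx)) hx₁ ht₁ (le_max_left _ _)
  have hpos : 0 < θ x₀ t₀ := pos_of_mul_pos_right (heq ▸ ha0) (Real.exp_pos _).le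
  refine ⟨x₀, hx₀, t₀, ht₀, hpos, ?_, fun x hx => ?_, fun t ht => ?_⟩
  · calc θ x₀ t₀ ≤ Real.exp t₀ * θ x₀ t₀ :=
          le_mul_of_one_le_left hpos.le (Real.one_le_exp ht₀.1.le)
      _ < δ := heq ▸ ha
  · exact le_of_mul_le_mul_left (heq.trans_le (hge x hx t₀ ⟨ht₀.1.le, le_rfl⟩)) (Real.exp_pos _)
  · exact heq.trans_le (hge x₀ hx₀ t ht)

theorem temperature_uniform_lower_bound_general
    (T σ lam : ℝ) (hσ : 0 < σ) (hlam : 0 < lam)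
    (p_s : ℝ → ℝ)
    (hps_lim : Filter.Tendsto (fun s => p_s s / s) (nhdsWithin 0 (Set.Ioi 0)) (nhds 0)) :
    ∃ δ₀ : ℝ, 0 < δ₀ ∧ ∀ (δ κ₁ β0 β1 θb0 θb1 : ℝ) (ρ χ κ G θ : ℝ → ℝ → ℝ),
      0 < δ →
      δ ≤ δ₀ →
      0 < κ₁ →
      0 < β0 →
      0 < β1 →
      δ ≤ θb0 →
      δ ≤ θb1 →
      ContinuousOn (fun p : ℝ × ℝ => ρ p.1 p.2) (Set.Icc 0 1 ×ˢ Set.Icc 0 T) →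
      ContinuousOn (fun p : ℝ × ℝ => χ p.1 p.2) (Set.Icc 0 1 ×ˢ Set.Icc 0 T) →
      ContinuousOn (fun p : ℝ × ℝ => κ p.1 p.2) (Set.Icc 0 1 ×ˢ Set.Icc 0 T) →
      ContinuousOn (fun p : ℝ × ℝ => G p.1 p.2) (Set.Icc 0 1 ×ˢ Set.Icc 0 T) →
      (∀ x ∈ Set.Icc (0:ℝ) 1, ∀ t ∈ Set.Icc (0:ℝ) T, 0 ≤ ρ x t) →
      (∀ x ∈ Set.Icc (0:ℝ) 1, ∀ t ∈ Set.Icc (0:ℝ) T, 0 ≤ χ x t) →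
      (∀ x ∈ Set.Icc (0:ℝ) 1, ∀ t ∈ Set.Icc (0:ℝ) T, κ₁ ≤ κ x t) →
      ContinuousOn (fun p : ℝ × ℝ => θ p.1 p.2) (Set.Icc 0 1 ×ˢ Set.Icc 0 T) →
      (∀ t ∈ Set.Ioc (0:ℝ) T, ContDiffOn ℝ 2 (fun x => θ x t) (Set.Icc 0 1)) →
      (∀ x ∈ Set.Icc (0:ℝ) 1, ∀ t ∈ Set.Ioc (0:ℝ) T, DifferentiableAt ℝ (fun s => θ x s) t) →
      (∀ x ∈ Set.Ioo (0:ℝ) 1, ∀ t ∈ Set.Ioc (0:ℝ) T,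
      (ρ x t + σ) * deriv (fun s => θ x s) t
      = deriv (fun y => κ y t * deriv (fun z => θ z t) y) x
        + G x t * deriv (fun z => θ z t) x
        + (lam + θ x t) * (ρ x t * χ x t - p_s (θ x t))) →
      (∀ t ∈ Set.Ioc (0:ℝ) T,
      κ 1 t * deriv (fun z => θ z t) 1 = β1 * (θb1 - θ 1 t)) →
      (∀ t ∈ Set.Ioc (0:ℝ) T,
      κ 0 t * deriv (fun z => θ z t) 0 = β0 * (θ 0 t - θb0)) →
      (∀ x ∈ Set.Icc (0:ℝ) 1, δ ≤ θ x 0) →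
      ∀ x ∈ Set.Icc (0:ℝ) 1, ∀ t ∈ Set.Icc (0:ℝ) T, Real.exp (-T) * δ ≤ θ x t := by
  obtain ⟨ε, hε, hreact⟩ :=
    mem_nhdsGT_iff_exists_Ioo_subset.1 (eventually_mul_lt_of_tendsto_div hps_lim lam hσ)
  refine ⟨ε, hε, fun δ κ₁ β0 β1 θb0 θb1 ρ χ κ G θ hδ hδε hκ₁ hβ0 hβ1 hθb0 hθb1 _ _ hκc _ hρ hχ hκ
    hθc hθx hθt hpde hbc1 hbc0 hθ0 => ?_⟩
  by_contra! hlow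
  obtain ⟨x₀, hx₀, t₀, ht₀, hθ₀, hθ₀δ, hmin_x, hmin_t⟩ :=
    exists_first_touch_of_lt_exp_neg_mul isCompact_Icc hδ hθc hθ0 hlow
  have hθ_t := deriv_le_neg_of_isMinOn_exp_mul ht₀.1 hmin_t (hθt x₀ hx₀ t₀ ht₀)
  have hκ₀ : 0 < κ x₀ t₀ := hκ₁.trans_le (hκ x₀ hx₀ t₀ (Ioc_subset_Icc_self ht₀))
  rcases hx₀.1.eq_or_lt with rfl | hx0
  · have := deriv_nonneg_of_isMinOn_Icc_left one_pos hmin_x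
    nlinarith [hbc0 t₀ ht₀]
  rcases hx₀.2.eq_or_lt with rfl | hx1
  · have := deriv_nonpos_of_isMinOn_Icc_right one_pos hmin_x
    nlinarith [hbc1 t₀ ht₀]
  have hnhds : Icc (0 : ℝ) 1 ∈ 𝓝 x₀ := Icc_mem_nhds hx0 hx1
  have hκ_slice : ContinuousOn (fun y => κ y t₀) (Icc 0 1) :=
    hκc.comp (continuous_id.prodMk continuous_const).continuousOn
      fun y hy => ⟨hy, Ioc_subset_Icc_self ht₀⟩
  have hflux := (hmin_x.isLocalMin hnhds).deriv_mul_deriv_nonneg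
    ((hθx t₀ ht₀).contDiffAt hnhds) (hκ_slice.continuousAt hnhds) hκ₀.le
  have hpde₀ := hpde x₀ ⟨hx0, hx1⟩ t₀ ht₀
  rw [(hmin_x.isLocalMin hnhds).deriv_eq_zero, mul_zero, add_zero] at hpde₀
  have hp : (lam + θ x₀ t₀) * p_s (θ x₀ t₀) < σ * θ x₀ t₀ := hreact ⟨hθ₀, hθ₀δ.trans_le hδε⟩
  have hρ₀ := hρ x₀ hx₀ t₀ (Ioc_subset_Icc_self ht₀)
  have hχ₀ := hχ x₀ hx₀ t₀ (Ioc_subset_Icc_self ht₀)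
  linarith [mul_le_mul_of_nonneg_left hθ_t (by linarith : 0 ≤ ρ x₀ t₀ + σ),
    mul_nonneg (by linarith : 0 ≤ lam + θ x₀ t₀) (mul_nonneg hρ₀ hχ₀), mul_nonneg hρ₀ hθ₀.le]

theorem temperature_uniform_lower_bound
    (T σ lam : ℝ) (hT : 0 < T) (hσ : 0 < σ) (hlam : 0 < lam)
    (p_s : ℝ → ℝ) (hps_c : Continuous p_s) (hps_mono : Monotone p_s)
    (hps_nonneg : ∀ s, 0 ≤ p_s s) (hps_zero : ∀ s ≤ (0:ℝ), p_s s = 0)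
    (hps_lim : Filter.Tendsto (fun s => p_s s / s) (nhdsWithin 0 (Set.Ioi 0)) (nhds 0)) :
    ∃ δ₀ : ℝ, 0 < δ₀ ∧ ∀ (δ κ₁ β0 β1 θb0 θb1 : ℝ) (ρ χ κ G θ : ℝ → ℝ → ℝ),
      0 < δ →
      δ ≤ δ₀ →
      0 < κ₁ →
      0 < β0 →
      0 < β1 →
      δ ≤ θb0 →
      δ ≤ θb1 →
      ContinuousOn (fun p : ℝ × ℝ => ρ p.1 p.2) (Set.Icc 0 1 ×ˢ Set.Icc 0 T) →
      ContinuousOn (fun p : ℝ × ℝ => χ p.1 p.2) (Set.Icc 0 1 ×ˢ Set.Icc 0 T) →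
      ContinuousOn (fun p : ℝ × ℝ => κ p.1 p.2) (Set.Icc 0 1 ×ˢ Set.Icc 0 T) →
      ContinuousOn (fun p : ℝ × ℝ => G p.1 p.2) (Set.Icc 0 1 ×ˢ Set.Icc 0 T) →
      (∀ x ∈ Set.Icc (0:ℝ) 1, ∀ t ∈ Set.Icc (0:ℝ) T, 0 ≤ ρ x t) →
      (∀ x ∈ Set.Icc (0:ℝ) 1, ∀ t ∈ Set.Icc (0:ℝ) T, 0 ≤ χ x t) →
      (∀ x ∈ Set.Icc (0:ℝ) 1, ∀ t ∈ Set.Icc (0:ℝ) T, κ₁ ≤ κ x t) →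
      ContinuousOn (fun p : ℝ × ℝ => θ p.1 p.2) (Set.Icc 0 1 ×ˢ Set.Icc 0 T) →
      (∀ t ∈ Set.Ioc (0:ℝ) T, ContDiffOn ℝ 2 (fun x => θ x t) (Set.Icc 0 1)) →
      (∀ x ∈ Set.Icc (0:ℝ) 1, ∀ t ∈ Set.Ioc (0:ℝ) T, DifferentiableAt ℝ (fun s => θ x s) t) →
      (∀ x ∈ Set.Ioo (0:ℝ) 1, ∀ t ∈ Set.Ioc (0:ℝ) T,
      (ρ x t + σ) * deriv (fun s => θ x s) t
      = deriv (fun y => κ y t * deriv (fun z => θ z t) y) x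
        + G x t * deriv (fun z => θ z t) x
        + (lam + θ x t) * (ρ x t * χ x t - p_s (θ x t))) →
      (∀ t ∈ Set.Ioc (0:ℝ) T,
      κ 1 t * deriv (fun z => θ z t) 1 = β1 * (θb1 - θ 1 t)) →
      (∀ t ∈ Set.Ioc (0:ℝ) T,
      κ 0 t * deriv (fun z => θ z t) 0 = β0 * (θ 0 t - θb0)) →
      (∀ x ∈ Set.Icc (0:ℝ) 1, δ ≤ θ x 0) →
      ∀ x ∈ Set.Icc (0:ℝ) 1, ∀ t ∈ Set.Icc (0:ℝ) T, Real.exp (-T) * δ ≤ θ x t :=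
  temperature_uniform_lower_bound_general T σ lam hσ hlam p_s hps_lim
end

section
/- There exists a universal constant C₂ > 0 such that for every integer l ≥ 1 and every μ > 0 there exists a constant C(l, μ) ≥ 0 with the following property: every nonnegative continuously differentiable function θ on [0,1] satisfies (max_{x∈[0,1]} θ(x))^{l+3/2} ≤ C₂ ∫₀¹ θ^{l+3/2} dx + C(l, μ) ∫₀¹ θ^{(l+1)(2l+3)/(2l+1)} dx + μ ∫₀¹ θ^{l−1} (θ')² dx. -/
/-!
With `p = l + 3/2`, the power `g = θ ^ p` is absolutely continuous, so its value at a maximum point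
of `θ` exceeds its value at a minimum point, which is at most `∫ g`, by at most `∫ |g'|`.
The integrand `|g'| = p θ ^ (l + 1/2) |θ'|` is split by AM-GM into `μ θ ^ (l - 1) θ'²` and
`(p² / 4μ) θ ^ (l + 2)`, and Young's inequality with the exponents `p` and `p / (p - 1)`, applied to
`θ ^ (l + 2) = θ · θ ^ (l + 1)`, bounds the latter by `θ ^ p + C θ ^ q` with
`C = (p² / 4μ) ^ (p / (p - 1))`. The two occurrences of `∫ θ ^ p` give `C₂ = 2`.
-/

open Set MeasureTheory intervalIntegral

theorem abs_sub_le_integral_abs_deriv {g g' : ℝ → ℝ} {a b y z : ℝ}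
    (hg : ContinuousOn g (Icc a b)) (hderiv : ∀ x ∈ Ioo a b, HasDerivAt g (g' x) x)
    (hint : IntervalIntegrable g' volume a b) (hy : y ∈ Icc a b) (hz : z ∈ Icc a b) :
    |g y - g z| ≤ ∫ x in a..b, |g' x| := by
  wlog hzy : z ≤ y generalizing y z
  · rw [abs_sub_comm]
    exact this hz hy (le_of_not_ge hzy)
  have hsub : Icc z y ⊆ Icc a b := Icc_subset_Icc hz.1 hy.2
  have hint' : IntervalIntegrable g' volume z y := by
    refine hint.mono_set ?_
    rwa [uIcc_of_le hzy, uIcc_of_le (hz.1.trans (hzy.trans hy.2))]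
  rw [← integral_eq_sub_of_hasDerivAt_of_le hzy (hg.mono hsub)
    (fun x hx => hderiv x (Ioo_subset_Ioo hz.1 hy.2 hx)) hint']
  calc |∫ x in z..y, g' x| ≤ ∫ x in z..y, |g' x| := abs_integral_le_integral_abs hzy
    _ ≤ ∫ x in a..b, |g' x| :=
      integral_mono_interval hz.1 hzy hy.2 (.of_forall fun _ => abs_nonneg _) hint.abs

theorem exists_mul_le_integral {g : ℝ → ℝ} {a b : ℝ} (hab : a ≤ b)
    (hg : ContinuousOn g (Icc a b)) : ∃ z ∈ Icc a b, (b - a) * g z ≤ ∫ x in a..b, g x := by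
  obtain ⟨z, hz, hmin⟩ := isCompact_Icc.exists_isMinOn (nonempty_Icc.2 hab) hg
  refine ⟨z, hz, ?_⟩
  calc (b - a) * g z = ∫ _ in a..b, g z := by simp
    _ ≤ ∫ x in a..b, g x :=
      integral_mono_on hab intervalIntegrable_const (hg.intervalIntegrable_of_Icc hab)
        fun _ hx => hmin hx

theorem mul_le_integral_add_mul_integral_abs_deriv {g g' : ℝ → ℝ} {a b y : ℝ} (hab : a ≤ b)
    (hg : ContinuousOn g (Icc a b)) (hderiv : ∀ x ∈ Ioo a b, HasDerivAt g (g' x) x)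
    (hint : IntervalIntegrable g' volume a b) (hy : y ∈ Icc a b) :
    (b - a) * g y ≤ (∫ x in a..b, g x) + (b - a) * ∫ x in a..b, |g' x| := by
  obtain ⟨z, hz, hgz⟩ := exists_mul_le_integral hab hg
  have hosc := mul_le_mul_of_nonneg_left
    ((le_abs_self _).trans (abs_sub_le_integral_abs_deriv hg hderiv hint hy hz)) (sub_nonneg.2 hab)
  rw [mul_sub] at hosc
  linarith

theorem abs_le_add_of_sq_le_four_mul {x u w : ℝ} (hu : 0 ≤ u) (hw : 0 ≤ w)
    (h : x ^ 2 ≤ 4 * u * w) : |x| ≤ u + w :=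
  abs_le_of_sq_le_sq (by nlinarith [sq_nonneg (u - w)]) (add_nonneg hu hw)

theorem Real.HolderConjugate.mul_le_rpow_add_rpow {a b p q : ℝ} (ha : 0 ≤ a) (hb : 0 ≤ b)
    (hpq : p.HolderConjugate q) : a * b ≤ a ^ p + b ^ q := by
  have hp : a ^ p / p ≤ a ^ p := div_le_self (Real.rpow_nonneg ha p) hpq.lt.le
  have hq : b ^ q / q ≤ b ^ q := div_le_self (Real.rpow_nonneg hb q) hpq.symm.lt.le
  linarith [Real.young_inequality_of_nonneg ha hb hpq]

theorem abs_mul_mul_rpow_le {l : ℕ} (hl : 1 ≤ l) {μ t : ℝ} (hμ : 0 < μ) (ht : 0 ≤ t) (v : ℝ) :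
    |v * ((l : ℝ) + 3 / 2) * t ^ ((l : ℝ) + 3 / 2 - 1)|
      ≤ μ * (t ^ (l - 1) * v ^ 2) + ((l : ℝ) + 3 / 2) ^ 2 / (4 * μ) * t ^ (l + 2) := by
  refine abs_le_add_of_sq_le_four_mul (by positivity) (by positivity) (le_of_eq ?_)
  have hsq : (t ^ ((l : ℝ) + 3 / 2 - 1)) ^ 2 = t ^ (l - 1) * t ^ (l + 2) := by
    rw [← Real.rpow_natCast, ← Real.rpow_mul ht, ← pow_add, ← Real.rpow_natCast]
    congr 1
    push_cast [hl]
    ring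
  rw [mul_pow, mul_pow, hsq]
  field_simp

theorem mul_pow_le_rpow_add_rpow (l : ℕ) {K t : ℝ} (hK : 0 ≤ K) (ht : 0 ≤ t) :
    K * t ^ (l + 2) ≤ t ^ ((l : ℝ) + 3 / 2)
      + K ^ ((2 * (l : ℝ) + 3) / (2 * (l : ℝ) + 1))
        * t ^ ((((l : ℝ) + 1) * (2 * (l : ℝ) + 3)) / (2 * (l : ℝ) + 1)) := by
  have hpq : ((l : ℝ) + 3 / 2).HolderConjugate ((2 * (l : ℝ) + 3) / (2 * (l : ℝ) + 1)) :=
    have hl : (0 : ℝ) ≤ l := l.cast_nonneg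
    (Real.holderConjugate_iff_eq_conjExponent (by linarith)).2 <| by
      rw [div_eq_div_iff (by positivity) (by linarith)]
      ring
  calc K * t ^ (l + 2) = t * (K * t ^ (l + 1)) := by ring
    _ ≤ t ^ ((l : ℝ) + 3 / 2) + (K * t ^ (l + 1)) ^ ((2 * (l : ℝ) + 3) / (2 * (l : ℝ) + 1)) :=
      hpq.mul_le_rpow_add_rpow ht (by positivity)
    _ = _ := by
      rw [Real.mul_rpow hK (by positivity), ← Real.rpow_natCast, ← Real.rpow_mul ht,
        Nat.cast_add_one, mul_div_assoc]

noncomputable def gnConstant (l : ℕ) (μ : ℝ) : ℝ :=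
  (((l : ℝ) + 3 / 2) ^ 2 / (4 * μ)) ^ ((2 * (l : ℝ) + 3) / (2 * (l : ℝ) + 1))

theorem abs_mul_mul_rpow_le_gnConstant {l : ℕ} (hl : 1 ≤ l) {μ t : ℝ} (hμ : 0 < μ) (ht : 0 ≤ t)
    (v : ℝ) :
    |v * ((l : ℝ) + 3 / 2) * t ^ ((l : ℝ) + 3 / 2 - 1)|
      ≤ μ * (t ^ (l - 1) * v ^ 2) + (t ^ ((l : ℝ) + 3 / 2) + gnConstant l μ
        * t ^ ((((l : ℝ) + 1) * (2 * (l : ℝ) + 3)) / (2 * (l : ℝ) + 1))) := by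
  unfold gnConstant
  linarith [abs_mul_mul_rpow_le hl hμ ht v,
    mul_pow_le_rpow_add_rpow l (K := ((l : ℝ) + 3 / 2) ^ 2 / (4 * μ)) (by positivity) ht]

theorem rpow_le_integral_of_hasDerivAt {l : ℕ} (hl : 1 ≤ l) {μ : ℝ} (hμ : 0 < μ) {θ θ' : ℝ → ℝ}
    (hθ : ContinuousOn θ (Icc 0 1)) (hθ' : ContinuousOn θ' (Icc 0 1))
    (hderiv : ∀ x ∈ Ioo 0 1, HasDerivAt θ (θ' x) x) (hθ0 : ∀ x ∈ Icc (0 : ℝ) 1, 0 ≤ θ x)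
    {y : ℝ} (hy : y ∈ Icc (0 : ℝ) 1) :
    θ y ^ ((l : ℝ) + 3 / 2)
      ≤ 2 * (∫ x in (0 : ℝ)..1, θ x ^ ((l : ℝ) + 3 / 2))
        + gnConstant l μ * (∫ x in (0 : ℝ)..1,
            θ x ^ ((((l : ℝ) + 1) * (2 * (l : ℝ) + 3)) / (2 * (l : ℝ) + 1)))
        + μ * (∫ x in (0 : ℝ)..1, θ x ^ (l - 1) * θ' x ^ 2) := by
  have hp : 1 ≤ (l : ℝ) + 3 / 2 := by have : (0 : ℝ) ≤ l := l.cast_nonneg; linarith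
  set p : ℝ := (l : ℝ) + 3 / 2
  set q : ℝ := (((l : ℝ) + 1) * (2 * (l : ℝ) + 3)) / (2 * (l : ℝ) + 1)
  set C := gnConstant l μ
  have hint {f : ℝ → ℝ} (hf : ContinuousOn f (Icc 0 1)) : IntervalIntegrable f volume 0 1 :=
    hf.intervalIntegrable_of_Icc zero_le_one
  have hθp : ContinuousOn (fun x => θ x ^ p) (Icc 0 1) :=
    hθ.rpow_const fun _ _ => .inr (by linarith)
  have hθq : ContinuousOn (fun x => θ x ^ q) (Icc 0 1) :=
    hθ.rpow_const fun _ _ => .inr (by positivity)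
  have hdiss : ContinuousOn (fun x => θ x ^ (l - 1) * θ' x ^ 2) (Icc 0 1) :=
    (hθ.pow _).mul (hθ'.pow 2)
  have hg' : ContinuousOn (fun x => θ' x * p * θ x ^ (p - 1)) (Icc 0 1) :=
    (hθ'.mul continuousOn_const).mul (hθ.rpow_const fun _ _ => .inr (by linarith))
  have hosc := mul_le_integral_add_mul_integral_abs_deriv zero_le_one hθp
    (fun x hx => (hderiv x hx).rpow_const (.inr hp)) (hint hg') hy
  have hpointwise (x) (hx : x ∈ Icc (0 : ℝ) 1) : |θ' x * p * θ x ^ (p - 1)|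
      ≤ μ * (θ x ^ (l - 1) * θ' x ^ 2) + (θ x ^ p + C * θ x ^ q) :=
    abs_mul_mul_rpow_le_gnConstant hl hμ (hθ0 x hx) (θ' x)
  have hderiv_int : (∫ x in (0 : ℝ)..1, |θ' x * p * θ x ^ (p - 1)|)
      ≤ μ * (∫ x in (0 : ℝ)..1, θ x ^ (l - 1) * θ' x ^ 2)
        + ((∫ x in (0 : ℝ)..1, θ x ^ p) + C * ∫ x in (0 : ℝ)..1, θ x ^ q) := by
    rw [← intervalIntegral.integral_const_mul, ← intervalIntegral.integral_const_mul,
      ← intervalIntegral.integral_add (hint hθp) ((hint hθq).const_mul C),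
      ← intervalIntegral.integral_add ((hint hdiss).const_mul μ)
        ((hint hθp).add ((hint hθq).const_mul C))]
    exact integral_mono_on zero_le_one (hint hg'.abs)
      (hint ((continuousOn_const.mul hdiss).add (hθp.add (continuousOn_const.mul hθq)))) hpointwise
  simp only [sub_zero, one_mul] at hosc
  linarith

theorem gagliardo_nirenberg_power_interpolation :
    ∃ C₂ : ℝ, 0 < C₂ ∧ ∀ l : ℕ, 1 ≤ l → ∀ μ : ℝ, 0 < μ →
      ∃ C : ℝ, 0 ≤ C ∧ ∀ θ : ℝ → ℝ,
        ContDiffOn ℝ 1 θ (Set.Icc 0 1) →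
        (∀ x ∈ Set.Icc (0:ℝ) 1, 0 ≤ θ x) →
        (sSup (θ '' Set.Icc 0 1)) ^ ((l : ℝ) + 3 / 2)
          ≤ C₂ * (∫ x in (0:ℝ)..1, θ x ^ ((l : ℝ) + 3 / 2))
            + C * (∫ x in (0:ℝ)..1,
                θ x ^ ((((l : ℝ) + 1) * (2 * (l : ℝ) + 3)) / (2 * (l : ℝ) + 1)))
            + μ * (∫ x in (0:ℝ)..1, θ x ^ (l - 1) * (deriv θ x) ^ 2) := by
  refine ⟨2, two_pos, fun l hl μ hμ => ⟨gnConstant l μ, by unfold gnConstant; positivity,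
    fun θ hθ hθ0 => ?_⟩⟩
  obtain ⟨y, hy, hsup⟩ : sSup (θ '' Icc 0 1) ∈ θ '' Icc 0 1 :=
    (isCompact_Icc.image_of_continuousOn hθ.continuousOn).sSup_mem
      ((nonempty_Icc.2 zero_le_one).image θ)
  have hderiv (x) (hx : x ∈ Ioo (0 : ℝ) 1) : HasDerivAt θ (derivWithin θ (Icc 0 1) x) x :=
    (hθ.differentiableOn one_ne_zero x (Ioo_subset_Icc_self hx)).hasDerivWithinAt.hasDerivAt
      (Icc_mem_nhds hx.1 hx.2)
  have hdiss : (∫ x in (0 : ℝ)..1, θ x ^ (l - 1) * deriv θ x ^ 2)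
      = ∫ x in (0 : ℝ)..1, θ x ^ (l - 1) * derivWithin θ (Icc 0 1) x ^ 2 :=
    integral_congr_uIoo fun x hx => by
      rw [(hderiv x (by rwa [uIoo_of_le zero_le_one] at hx)).deriv]
  rw [← hsup, hdiss]
  exact rpow_le_integral_of_hasDerivAt hl hμ hθ.continuousOn
    (hθ.continuousOn_derivWithin (uniqueDiffOn_Icc one_pos) le_rfl) hderiv hθ0 hy
end
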